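/- For P(r) = (r²)^{−α} with r² = ∑_{i=1}^m (x_i − x_{0i})² and α = α_1 + ⋯ + α_n − 1 + m/2, the function P satisfies ∑_{i=1}^{m} ∂²P/∂x_i² + 2 ∑_{j=1}^{n} (α_j/x_j) ∂P/∂x_j = (4α/r²) P(r) ∑_{j=1}^{n} (x_{0j}/x_j) α_j. -/

import Mathlib

open Finset

/-- Partial derivative in the i-th coordinate direction. -/
noncomputable def pd {m : ℕ} (i : Fin m) (f : (Fin m → ℝ) → ℝ) (x : Fin m → ℝ) : ℝ :=
  fderiv ℝ f x (Pi.single i 1)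

/-- r² = ∑ (x_i − x₀ᵢ)². -/
def r2 {m : ℕ} (x0 x : Fin m → ℝ) : ℝ := ∑ i : Fin m, (x i - x0 i) ^ 2

/-- P(x) = (r²)^{−α}. -/
noncomputable def Pfun {m : ℕ} (x0 : Fin m → ℝ) (α : ℝ) (x : Fin m → ℝ) : ℝ :=
  Real.rpow (r2 x0 x) (-α)

open Filter Topology

/-!
`P = (r²)^β` with `β = -α` is a function of `r²` alone, so `∂ᵢP = 2β (r²)^(β-1) (xᵢ - x₀ᵢ)` and
`ΔP = 2β (m + 2β - 2) (r²)^(β-1)`. Writing `(xⱼ - x₀ⱼ)/xⱼ = 1 - x₀ⱼ/xⱼ` splits the drift term into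
`-4α (r²)^(-α-1) ∑ αⱼ` plus the right-hand side; the choice of `α` makes `m - 2α - 2 = -2 ∑ αⱼ`,
so `ΔP` cancels the first part.
-/

section PartialDerivative

variable {m : ℕ} {f g : (Fin m → ℝ) → ℝ} {x : Fin m → ℝ} (i : Fin m)

lemma pd_congr_of_eventuallyEq (h : f =ᶠ[𝓝 x] g) : pd i f x = pd i g x := by
  simp only [pd, h.fderiv_eq]

lemma pd_comp {φ : ℝ → ℝ} {φ' : ℝ} (hφ : HasDerivAt φ φ' (f x)) (hf : DifferentiableAt ℝ f x) :
    pd i (fun y => φ (f y)) x = φ' * pd i f x := by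
  have h : HasFDerivAt (fun y => φ (f y)) (φ' • fderiv ℝ f x) x :=
    hφ.comp_hasFDerivAt x hf.hasFDerivAt
  simp [pd, h.fderiv]

lemma pd_mul (hf : DifferentiableAt ℝ f x) (hg : DifferentiableAt ℝ g x) :
    pd i (fun y => f y * g y) x = pd i f x * g x + f x * pd i g x := by
  simp only [pd, fderiv_fun_mul hf hg, add_apply, smul_apply, smul_eq_mul]
  ring

lemma pd_const_mul (hf : DifferentiableAt ℝ f x) (c : ℝ) :
    pd i (fun y => c * f y) x = c * pd i f x := by
  simp [pd, fderiv_const_mul hf]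

lemma hasFDerivAt_apply_sub_const (c : ℝ) :
    HasFDerivAt (fun y : Fin m → ℝ => y i - c) (ContinuousLinearMap.proj (R := ℝ) i) x :=
  (hasFDerivAt_apply (𝕜 := ℝ) i x).sub_const c

lemma pd_apply_sub_const (c : ℝ) : pd i (fun y => y i - c) x = 1 := by
  simp [pd, (hasFDerivAt_apply_sub_const i c).fderiv]

end PartialDerivative

section SquaredDistance

variable {m : ℕ} (x0 : Fin m → ℝ) {x : Fin m → ℝ}

lemma r2_pos (hx : x ≠ x0) : 0 < r2 x0 x := by
  obtain ⟨i, hi⟩ := Function.ne_iff.mp hx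
  exact sum_pos' (fun i _ => sq_nonneg _)
    ⟨i, mem_univ i, pow_two_pos_of_ne_zero (sub_ne_zero.mpr hi)⟩

lemma hasFDerivAt_r2 :
    HasFDerivAt (r2 x0)
      (∑ k, (2 * (x k - x0 k)) • ContinuousLinearMap.proj (R := ℝ) (φ := fun _ : Fin m => ℝ) k) x :=
  HasFDerivAt.fun_sum fun k _ => by
    simpa [mul_comm] using (hasFDerivAt_apply_sub_const k (x0 k)).pow 2

lemma differentiable_r2 : Differentiable ℝ (r2 x0) :=
  fun _ => (hasFDerivAt_r2 x0).differentiableAt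

lemma pd_r2 (i : Fin m) : pd i (r2 x0) x = 2 * (x i - x0 i) := by
  simp [pd, (hasFDerivAt_r2 x0).fderiv, Pi.single_apply]

end SquaredDistance

section PowerOfSquaredDistance

variable {m : ℕ} (x0 : Fin m → ℝ) {x : Fin m → ℝ} (β : ℝ)

lemma pd_rpow_r2 (hx : 0 < r2 x0 x) (i : Fin m) :
    pd i (fun y => r2 x0 y ^ β) x = 2 * β * r2 x0 x ^ (β - 1) * (x i - x0 i) := by
  rw [pd_comp i (Real.hasDerivAt_rpow_const (Or.inl hx.ne')) (differentiable_r2 x0 x), pd_r2]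
  ring

lemma pd_pd_rpow_r2 (hx : 0 < r2 x0 x) (i : Fin m) :
    pd i (pd i (fun y => r2 x0 y ^ β)) x =
      2 * β * r2 x0 x ^ (β - 1) + 4 * β * (β - 1) * r2 x0 x ^ (β - 2) * (x i - x0 i) ^ 2 := by
  have hpd : pd i (fun y => r2 x0 y ^ β) =ᶠ[𝓝 x]
      fun y => 2 * β * (r2 x0 y ^ (β - 1) * (y i - x0 i)) := by
    filter_upwards [isOpen_lt continuous_const (differentiable_r2 x0).continuous |>.mem_nhds hx]
      with y hy
    rw [pd_rpow_r2 x0 β hy]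
    ring
  have hdiff : DifferentiableAt ℝ (fun y => r2 x0 y ^ (β - 1)) x :=
    ((differentiable_r2 x0) x).rpow_const (Or.inl hx.ne')
  rw [pd_congr_of_eventuallyEq i hpd, pd_const_mul i (hdiff.fun_mul (by fun_prop)),
    pd_mul i hdiff (by fun_prop), pd_rpow_r2 x0 (β - 1) hx, pd_apply_sub_const]
  ring_nf

lemma sum_pd_pd_rpow_r2 (hx : 0 < r2 x0 x) :
    ∑ i, pd i (pd i (fun y => r2 x0 y ^ β)) x = 2 * β * (m + 2 * β - 2) * r2 x0 x ^ (β - 1) := by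
  have hpow : r2 x0 x ^ (β - 2) * r2 x0 x = r2 x0 x ^ (β - 1) := by
    rw [← Real.rpow_add_one hx.ne']
    ring_nf
  simp only [pd_pd_rpow_r2 x0 β hx, sum_add_distrib, sum_const, card_univ, Fintype.card_fin,
    nsmul_eq_mul, ← mul_sum, show ∑ i, (x i - x0 i) ^ 2 = r2 x0 x from rfl]
  linear_combination 4 * β * (β - 1) * hpow

end PowerOfSquaredDistance

/-- With α = α₁+⋯+αₙ − 1 + m/2 :
 ∑ᵢ ∂²P/∂xᵢ² + 2 ∑ⱼ (αⱼ/xⱼ)∂P/∂xⱼ = (4α/r²) P ∑ⱼ (x₀ⱼ/xⱼ)αⱼ. -/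
theorem P_identity (m n : ℕ) (hnm : n ≤ m) (αv : Fin n → ℝ) (x0 x : Fin m → ℝ)
    (hx : x ≠ x0) (hpos : ∀ j : Fin n, 0 < x (Fin.castLE hnm j))
    (α : ℝ) (hα : α = (∑ j : Fin n, αv j) - 1 + (m : ℝ) / 2) :
    (∑ i : Fin m, pd i (pd i (Pfun x0 α)) x) +
      2 * ∑ j : Fin n, (αv j / x (Fin.castLE hnm j)) * pd (Fin.castLE hnm j) (Pfun x0 α) x =
    (4 * α / r2 x0 x) * Pfun x0 α x *
      ∑ j : Fin n, (x0 (Fin.castLE hnm j) / x (Fin.castLE hnm j)) * αv j := by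
  have hr : 0 < r2 x0 x := r2_pos x0 hx
  have hP : Pfun x0 α = fun y => r2 x0 y ^ (-α) := rfl
  have hdrift (j : Fin n) : αv j / x (Fin.castLE hnm j) * pd (Fin.castLE hnm j) (Pfun x0 α) x =
      -2 * α * r2 x0 x ^ (-α - 1) *
        (αv j - x0 (Fin.castLE hnm j) / x (Fin.castLE hnm j) * αv j) := by
    rw [hP, pd_rpow_r2 x0 (-α) hr]
    field_simp [(hpos j).ne']
  have hPx : Pfun x0 α x = r2 x0 x ^ (-α - 1) * r2 x0 x := by
    rw [hP, ← Real.rpow_add_one hr.ne']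
    ring_nf
  rw [sum_congr rfl fun j _ => hdrift j, ← mul_sum, sum_sub_distrib, hPx, hP,
    sum_pd_pd_rpow_r2 x0 (-α) hr]
  field_simp
  subst hα
  ring
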